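/- arXiv:2204.09009 — 2 statements merged into one kernel-verified Lean document; each statement's English description precedes it below -/
import Mathlib

section
/- For integers k ≥ 2 and n ≥ 2k and γ ∈ (0,1], let F be a family of stable k-subsets of {1,...,n} such that every element of {1,...,n} lies in at most γ·|F| members of F; then every subfamily F' ⊆ F with |F'| ≥ γ·|F| + k²·C(n-k-2,k-2) is not an intersecting family. -/
open Finset

attribute [local instance] Classical.propDecidable

/-- `A` is a stable subset of `{1,...,n}`: no two cyclically consecutive elements. -/
def Stable (n : ℕ) (A : Finset ℕ) : Prop :=
  (∀ i ∈ A, i + 1 ∉ A) ∧ ¬(1 ∈ A ∧ n ∈ A)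

/-- The collection of stable `k`-subsets of `{1,...,n}`. -/
noncomputable def stableSets (n k : ℕ) : Finset (Finset ℕ) :=
  ((Finset.Icc 1 n).powersetCard k).filter (fun A => Stable n A)

namespace Stmt16

def Good (n b' : ℕ) (S : Finset ℕ) : Prop :=
  S ⊆ Finset.Icc 2 (n-2) ∧ (∀ x ∈ S, x+1 ∉ S) ∧ (b'-1) ∉ S ∧ b' ∉ S ∧ (b'+1) ∉ S

noncomputable def phi (b' : ℕ) (S : Finset ℕ) : Finset ℕ :=
  S.image (fun x => x - (S.filter (· < x)).card - (if b' < x then 2 else 0))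

noncomputable def yfun (b' : ℕ) {S : Finset ℕ} {m : ℕ} (h : S.card = m) (i : Fin m) : ℕ :=
  S.orderEmbOfFin h i - (i : ℕ) - (if b' < S.orderEmbOfFin h i then 2 else 0)

noncomputable def rho (n a x : ℕ) : ℕ := (x + (2*n - a - 1)) % n + 1

/-- rank of an element in a finset equals the filter-count below it -/
lemma rank_eq {S : Finset ℕ} {m : ℕ} (h : S.card = m) (i : Fin m) :
    (S.filter (· < S.orderEmbOfFin h i)).card = i := by
  set e := S.orderEmbOfFin h with he
  have hmem : ∀ x, x ∈ S ↔ ∃ j, e j = x := by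
    intro x
    constructor
    · intro hx
      have : x ∈ Set.range e := by rw [he, Finset.range_orderEmbOfFin]; exact hx
      exact this
    · rintro ⟨j, rfl⟩; exact Finset.orderEmbOfFin_mem S h j
  have : S.filter (· < e i) = Finset.image e (Finset.univ.filter (· < i)) := by
    ext x
    simp only [mem_filter, mem_image, mem_univ, true_and]
    constructor
    · rintro ⟨hx, hlt⟩
      obtain ⟨j, rfl⟩ := (hmem x).1 hx
      exact ⟨j, (e.strictMono.lt_iff_lt).1 hlt, rfl⟩
    · rintro ⟨j, hj, rfl⟩
      exact ⟨(hmem _).2 ⟨j, rfl⟩, e.strictMono hj⟩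
  rw [this, Finset.card_image_of_injective _ e.injective]
  have : Finset.univ.filter (· < i) = Finset.Iio i := by ext j; simp
  rw [this, Fin.card_Iio]


lemma adj_spacing {n b' : ℕ} {S : Finset ℕ} (hS : Good n b' S) {m : ℕ} (h : S.card = m)
    {i j : Fin m} (hij : (i : ℕ) + 1 = (j : ℕ)) :
    S.orderEmbOfFin h i + 2 ≤ S.orderEmbOfFin h j := by
  set e := S.orderEmbOfFin h
  have h1 : e i < e j := e.strictMono (by rw [Fin.lt_iff_val_lt_val]; omega)
  have h2 : e i + 1 ≠ e j := by
    intro hcontra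
    exact hS.2.1 (e i) (Finset.orderEmbOfFin_mem S h i) (hcontra ▸ Finset.orderEmbOfFin_mem S h j)
  omega

lemma spacing {n b' : ℕ} {S : Finset ℕ} (hS : Good n b' S) (hb : 2 ≤ b') {m : ℕ}
    (h : S.card = m) (i : ℕ) (hi : i < m) :
    2 + 2*i ≤ S.orderEmbOfFin h ⟨i, hi⟩ ∧
      (b' < S.orderEmbOfFin h ⟨i, hi⟩ → 4 + 2*i ≤ S.orderEmbOfFin h ⟨i, hi⟩ ∧
        b' + 2 ≤ S.orderEmbOfFin h ⟨i, hi⟩) := by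
  set e := S.orderEmbOfFin h with he
  have hmemIcc : ∀ j : Fin m, 2 ≤ e j ∧ e j ≤ n - 2 := by
    intro j
    have := hS.1 (Finset.orderEmbOfFin_mem S h j)
    simpa [Finset.mem_Icc] using this
  have havoid : ∀ j : Fin m, e j ≠ b' - 1 ∧ e j ≠ b' ∧ e j ≠ b' + 1 := by
    intro j
    have hm := Finset.orderEmbOfFin_mem S h j
    refine ⟨?_, ?_, ?_⟩ <;> intro hcontra <;> rw [hcontra] at hm
    · exact hS.2.2.1 hm
    · exact hS.2.2.2.1 hm
    · exact hS.2.2.2.2 hm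
  induction i with
  | zero =>
    have h1 := (hmemIcc ⟨0, hi⟩).1
    have h2 := havoid ⟨0, hi⟩
    constructor
    · omega
    · intro hb'; omega
  | succ i ih =>
    have hi' : i < m := by omega
    have IH := ih hi'
    have hadj : e ⟨i, hi'⟩ + 2 ≤ e ⟨i+1, hi⟩ := adj_spacing hS h (by simp)
    have hav := havoid ⟨i, hi'⟩
    have hav' := havoid ⟨i+1, hi⟩
    constructor
    · omega
    · intro hb'
      by_cases hcase : b' < e ⟨i, hi'⟩
      · have := IH.2 hcase
        omega
      · have h2 := IH.1
        omega


lemma yfun_strictMono {n b' : ℕ} {S : Finset ℕ} (hS : Good n b' S) (hb : 2 ≤ b') {m : ℕ}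
    (h : S.card = m) : StrictMono (yfun b' h) := by
  have key : ∀ (i : ℕ) (hi : i + 1 < m), yfun b' h ⟨i, by omega⟩ < yfun b' h ⟨i+1, hi⟩ := by
    intro i hi
    have hsp1 := spacing hS hb h i (by omega)
    have hsp2 := spacing hS hb h (i+1) hi
    have hadj : S.orderEmbOfFin h ⟨i, by omega⟩ + 2 ≤ S.orderEmbOfFin h ⟨i+1, hi⟩ :=
      adj_spacing hS h (by simp)
    have hmono : S.orderEmbOfFin h ⟨i, by omega⟩ < S.orderEmbOfFin h ⟨i+1, hi⟩ := by omega
    have hav1 : S.orderEmbOfFin h ⟨i, by omega⟩ ≠ b' - 1 ∧ S.orderEmbOfFin h ⟨i, by omega⟩ ≠ b' := by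
      constructor <;> intro hc <;>
        [exact hS.2.2.1 (hc ▸ Finset.orderEmbOfFin_mem S h ⟨i, by omega⟩);
         exact hS.2.2.2.1 (hc ▸ Finset.orderEmbOfFin_mem S h ⟨i, by omega⟩)]
    unfold yfun
    simp only [Fin.val_mk]
    by_cases h1 : b' < S.orderEmbOfFin h ⟨i, by omega⟩
    · have := hsp1.2 h1
      by_cases h2 : b' < S.orderEmbOfFin h ⟨i+1, hi⟩
      · have := hsp2.2 h2
        simp only [h1, h2, if_true]
        omega
      · omega
    · by_cases h2 : b' < S.orderEmbOfFin h ⟨i+1, hi⟩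
      · have := hsp2.2 h2
        have := hsp1.1
        simp only [h1, h2, if_true, if_false]
        omega
      · have := hsp1.1
        have := hsp2.1
        simp only [h1, h2, if_false]
        omega
  intro a b hab
  obtain ⟨a, ha⟩ := a; obtain ⟨b, hb2⟩ := b
  simp only [Fin.mk_lt_mk] at hab
  clear hb
  induction b with
  | zero => omega
  | succ b ih =>
    rcases Nat.lt_or_ge a b with hab' | hab'
    · exact lt_trans (ih (by omega) hab') (key b hb2)
    · have : a = b := by omega
      subst this
      exact key a hb2


lemma self_eq_image {S : Finset ℕ} {m : ℕ} (h : S.card = m) :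
    S = Finset.image (S.orderEmbOfFin h) Finset.univ := by
  ext x
  simp only [Finset.mem_image, Finset.mem_univ, true_and]
  constructor
  · intro hx
    have : x ∈ Set.range (S.orderEmbOfFin h) := by rw [Finset.range_orderEmbOfFin]; exact hx
    exact this
  · rintro ⟨j, rfl⟩; exact Finset.orderEmbOfFin_mem S h j

lemma phi_eq_image (b' : ℕ) {S : Finset ℕ} {m : ℕ} (h : S.card = m) :
    phi b' S = Finset.image (yfun b' h) Finset.univ := by
  rw [phi]
  nth_rewrite 2 [self_eq_image h]
  rw [Finset.image_image]
  apply Finset.image_congr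
  intro i _
  simp only [Function.comp_apply, yfun, rank_eq h i]

lemma phi_card {n b' : ℕ} {S : Finset ℕ} (hS : Good n b' S) (hb : 2 ≤ b') {m : ℕ}
    (h : S.card = m) : (phi b' S).card = m := by
  rw [phi_eq_image b' h,
    Finset.card_image_of_injective _ (yfun_strictMono hS hb h).injective, Finset.card_univ,
    Fintype.card_fin]

lemma ybounds {n b' : ℕ} {S : Finset ℕ} (hS : Good n b' S) (hb : 2 ≤ b') (hbn : b' + 2 ≤ n)
    {m : ℕ} (h : S.card = m) (i : Fin m) :
    2 ≤ yfun b' h i ∧ yfun b' h i ≤ n - m - 3 := by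
  obtain ⟨i, hi⟩ := i
  have hsp := spacing hS hb h i hi
  constructor
  · unfold yfun
    simp only [Fin.val_mk]
    by_cases h1 : b' < S.orderEmbOfFin h ⟨i, hi⟩
    · have := hsp.2 h1; simp only [h1, if_true]; omega
    · simp only [h1, if_false]; omega
  · -- y_i ≤ y_{m-1} ≤ n - m - 3
    have hm1 : m - 1 < m := by omega
    have hmono : yfun b' h ⟨i, hi⟩ ≤ yfun b' h ⟨m-1, hm1⟩ := by
      rcases Nat.lt_or_ge i (m-1) with hc | hc
      · exact le_of_lt ((yfun_strictMono hS hb h) (by simp [Fin.lt_iff_val_lt_val]; omega))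
      · have : i = m - 1 := by omega
        subst this; exact le_rfl
    refine le_trans hmono ?_
    have hlast := spacing hS hb h (m-1) hm1
    have hIcc := hS.1 (Finset.orderEmbOfFin_mem S h ⟨m-1, hm1⟩)
    simp only [Finset.mem_Icc] at hIcc
    have hav1 : S.orderEmbOfFin h ⟨m-1, hm1⟩ ≠ b' - 1 := fun hc =>
      hS.2.2.1 (hc ▸ Finset.orderEmbOfFin_mem S h ⟨m-1, hm1⟩)
    have hav2 : S.orderEmbOfFin h ⟨m-1, hm1⟩ ≠ b' := fun hc =>
      hS.2.2.2.1 (hc ▸ Finset.orderEmbOfFin_mem S h ⟨m-1, hm1⟩)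
    unfold yfun
    simp only [Fin.val_mk]
    by_cases h1 : b' < S.orderEmbOfFin h ⟨m-1, hm1⟩
    · simp only [h1, if_true]; omega
    · simp only [h1, if_false]; omega

lemma phi_mem {n b' : ℕ} {S : Finset ℕ} (hS : Good n b' S) (hb : 2 ≤ b') (hbn : b' + 2 ≤ n)
    {m : ℕ} (h : S.card = m) :
    phi b' S ∈ (Finset.Icc 2 (n - m - 3)).powersetCard m := by
  rw [Finset.mem_powersetCard]
  refine ⟨?_, phi_card hS hb h⟩
  rw [phi_eq_image b' h]
  intro y hy
  simp only [Finset.mem_image, Finset.mem_univ, true_and] at hy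
  obtain ⟨i, rfl⟩ := hy
  have := ybounds hS hb hbn h i
  simp only [Finset.mem_Icc]
  omega

lemma decode {n b' : ℕ} {S : Finset ℕ} (hS : Good n b' S) (hb : 2 ≤ b') {m : ℕ}
    (h : S.card = m) (i : Fin m) :
    S.orderEmbOfFin h i =
      (if yfun b' h i + (i : ℕ) < b' then yfun b' h i + (i : ℕ)
       else yfun b' h i + (i : ℕ) + 2) := by
  obtain ⟨i, hi⟩ := i
  have hsp := spacing hS hb h i hi
  have hav1 : S.orderEmbOfFin h ⟨i, hi⟩ ≠ b' - 1 := fun hc =>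
    hS.2.2.1 (hc ▸ Finset.orderEmbOfFin_mem S h ⟨i, hi⟩)
  have hav2 : S.orderEmbOfFin h ⟨i, hi⟩ ≠ b' := fun hc =>
    hS.2.2.2.1 (hc ▸ Finset.orderEmbOfFin_mem S h ⟨i, hi⟩)
  unfold yfun
  simp only [Fin.val_mk]
  by_cases h1 : b' < S.orderEmbOfFin h ⟨i, hi⟩
  · have := hsp.2 h1
    have h2 : ¬ (S.orderEmbOfFin h ⟨i, hi⟩ - i - 2 + i < b') := by omega
    simp only [h1, if_true, h2, if_false]
    omega
  · have h2 : S.orderEmbOfFin h ⟨i, hi⟩ - i - 0 + i < b' := by omega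
    simp only [h1, if_false, h2, if_true]
    omega

lemma phi_injOn {n b' : ℕ} (hb : 2 ≤ b') {m : ℕ} {S T : Finset ℕ}
    (hS : Good n b' S) (hT : Good n b' T) (hSc : S.card = m) (hTc : T.card = m)
    (heq : phi b' S = phi b' T) : S = T := by
  have pfS : (phi b' S).card = m := phi_card hS hb hSc
  have hyS : yfun b' hSc = (phi b' S).orderEmbOfFin pfS := by
    apply Finset.orderEmbOfFin_unique
    · intro x
      rw [phi_eq_image b' hSc]
      exact Finset.mem_image.2 ⟨x, Finset.mem_univ x, rfl⟩
    · exact yfun_strictMono hS hb hSc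
  have hyT : yfun b' hTc = (phi b' S).orderEmbOfFin pfS := by
    apply Finset.orderEmbOfFin_unique
    · intro x
      rw [heq, phi_eq_image b' hTc]
      exact Finset.mem_image.2 ⟨x, Finset.mem_univ x, rfl⟩
    · exact yfun_strictMono hT hb hTc
  have hy : yfun b' hSc = yfun b' hTc := by rw [hyS, hyT]
  have he : ∀ i : Fin m, S.orderEmbOfFin hSc i = T.orderEmbOfFin hTc i := by
    intro i
    rw [decode hS hb hSc i, decode hT hb hTc i, hy]
  rw [self_eq_image hSc, self_eq_image hTc]
  apply Finset.image_congr
  intro i _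
  exact he i


variable {n a : ℕ}

lemma mod_succ (hn : 2 ≤ n) (z : ℕ) : (z % n + 1) % n = (z + 1) % n := by
  conv_rhs => rw [Nat.add_mod]
  rw [Nat.mod_eq_of_lt (show 1 < n by omega)]

lemma rho_mem (hn : 2 ≤ n) (x : ℕ) : rho n a x ∈ Finset.Icc 1 n := by
  have := Nat.mod_lt (x + (2*n - a - 1)) (show 0 < n by omega)
  simp only [rho, Finset.mem_Icc]
  omega

lemma rho_mod (hn : 2 ≤ n) (ha : 1 ≤ a) (ha2 : a ≤ n) (x : ℕ) :
    rho n a x % n = (x + (2*n - a)) % n := by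
  rw [rho, mod_succ hn]
  congr 1
  omega

lemma rho_a (hn : 2 ≤ n) (ha : 1 ≤ a) (ha2 : a ≤ n) : rho n a a = n := by
  rw [rho]
  have h1 : a + (2*n - a - 1) = n + (n - 1) := by omega
  rw [h1, Nat.add_mod_left, Nat.mod_eq_of_lt (by omega)]
  omega

lemma mem_Icc_mod (hn : 2 ≤ n) {x y : ℕ} (hx : x ∈ Finset.Icc 1 n) (hy : y ∈ Finset.Icc 1 n)
    (h : x % n = y % n) : x = y := by
  simp only [Finset.mem_Icc] at hx hy
  rcases eq_or_lt_of_le hx.2 with rfl | hx'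
  · rcases eq_or_lt_of_le hy.2 with rfl | hy'
    · rfl
    · rw [Nat.mod_self, Nat.mod_eq_of_lt hy'] at h; omega
  · rcases eq_or_lt_of_le hy.2 with rfl | hy'
    · rw [Nat.mod_self, Nat.mod_eq_of_lt hx'] at h; omega
    · rw [Nat.mod_eq_of_lt hx', Nat.mod_eq_of_lt hy'] at h; omega

lemma rho_inj (hn : 2 ≤ n) (ha : 1 ≤ a) (ha2 : a ≤ n) {x y : ℕ}
    (hx : x ∈ Finset.Icc 1 n) (hy : y ∈ Finset.Icc 1 n) (h : rho n a x = rho n a y) : x = y := by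
  have h1 : rho n a x % n = rho n a y % n := by rw [h]
  rw [rho_mod hn ha ha2, rho_mod hn ha ha2] at h1
  have h2 : x % n = y % n := by
    have := Nat.ModEq.add_right_cancel' (c := 2*n - a) h1
    exact this
  exact mem_Icc_mod hn hx hy h2

lemma adj_transfer (hn : 2 ≤ n) (ha : 1 ≤ a) (ha2 : a ≤ n) (x y : ℕ) :
    ((rho n a x + 1) % n = rho n a y % n) ↔ ((x + 1) % n = y % n) := by
  rw [← mod_succ hn (rho n a x), rho_mod hn ha ha2, rho_mod hn ha ha2, mod_succ hn]
  constructor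
  · intro h
    have h3 : x + (2*n-a) + 1 = x + 1 + (2*n-a) := by ring
    rw [h3] at h
    exact Nat.ModEq.add_right_cancel' (c := 2*n - a) h
  · intro h
    have h2 := Nat.ModEq.add_right (2*n - a) h
    have h3 : x + 1 + (2*n - a) = x + (2*n - a) + 1 := by ring
    rw [h3] at h2
    exact h2

lemma adj_iff (hn : 2 ≤ n) {x y : ℕ} (hx : x ∈ Finset.Icc 1 n) (hy : y ∈ Finset.Icc 1 n) :
    (x + 1) % n = y % n ↔ (y = x + 1 ∨ (x = n ∧ y = 1)) := by
  simp only [Finset.mem_Icc] at hx hy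
  rcases eq_or_lt_of_le hx.2 with rfl | hxlt
  · have h1 : (x + 1) % x = 1 := by
      rw [show x + 1 = x + 1 from rfl, Nat.add_mod_left, Nat.mod_eq_of_lt (by omega)]
    rw [h1]
    rcases eq_or_lt_of_le hy.2 with rfl | hylt
    · rw [Nat.mod_self]; constructor <;> intro h <;> omega
    · rw [Nat.mod_eq_of_lt hylt]; constructor <;> intro h <;> omega
  · have hx1 : x + 1 ≤ n := hxlt
    rcases eq_or_lt_of_le hx1 with hxn | hxlt2
    · rw [hxn, Nat.mod_self]
      rcases eq_or_lt_of_le hy.2 with rfl | hylt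
      · rw [Nat.mod_self]; constructor <;> intro h <;> omega
      · rw [Nat.mod_eq_of_lt hylt]; constructor <;> intro h <;> omega
    · rw [Nat.mod_eq_of_lt hxlt2]
      rcases eq_or_lt_of_le hy.2 with rfl | hylt
      · rw [Nat.mod_self]; constructor <;> intro h <;> omega
      · rw [Nat.mod_eq_of_lt hylt]; constructor <;> intro h <;> omega

lemma stable_iff_mod (hn : 2 ≤ n) {A : Finset ℕ} (hA : A ⊆ Finset.Icc 1 n) :
    Stable n A ↔ ∀ x ∈ A, ∀ y ∈ A, (x + 1) % n ≠ y % n := by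
  constructor
  · rintro ⟨h1, h2⟩ x hx y hy heq
    rw [adj_iff hn (hA hx) (hA hy)] at heq
    rcases heq with rfl | ⟨rfl, rfl⟩
    · exact h1 x hx hy
    · exact h2 ⟨hy, hx⟩
  · intro h
    constructor
    · intro i hi hcon
      exact h i hi (i+1) hcon ((adj_iff hn (hA hi) (hA hcon)).2 (Or.inl rfl))
    · rintro ⟨h1, hn'⟩
      exact h n hn' 1 h1 ((adj_iff hn (hA hn') (hA h1)).2 (Or.inr ⟨rfl, rfl⟩))

lemma image_stable (hn : 2 ≤ n) (ha : 1 ≤ a) (ha2 : a ≤ n) {A : Finset ℕ}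
    (hA : A ⊆ Finset.Icc 1 n) (hst : Stable n A) : Stable n (A.image (rho n a)) := by
  have hsub : A.image (rho n a) ⊆ Finset.Icc 1 n := by
    intro x hx
    obtain ⟨y, _, rfl⟩ := Finset.mem_image.1 hx
    exact rho_mem hn y
  rw [stable_iff_mod hn hsub]
  intro u hu v hv heq
  obtain ⟨x, hx, rfl⟩ := Finset.mem_image.1 hu
  obtain ⟨y, hy, rfl⟩ := Finset.mem_image.1 hv
  rw [adj_transfer hn ha ha2] at heq
  exact (stable_iff_mod hn hA).1 hst x hx y hy heq

lemma image_rho_inj (hn : 2 ≤ n) (ha : 1 ≤ a) (ha2 : a ≤ n) {A B : Finset ℕ}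
    (hA : A ⊆ Finset.Icc 1 n) (hB : B ⊆ Finset.Icc 1 n)
    (h : A.image (rho n a) = B.image (rho n a)) : A = B := by
  ext x
  constructor <;> intro hx
  · have : rho n a x ∈ B.image (rho n a) := h ▸ Finset.mem_image_of_mem _ hx
    obtain ⟨y, hy, hxy⟩ := Finset.mem_image.1 this
    exact (rho_inj hn ha ha2 (hB hy) (hA hx) hxy) ▸ hy
  · have : rho n a x ∈ A.image (rho n a) := h ▸ Finset.mem_image_of_mem _ hx
    obtain ⟨y, hy, hxy⟩ := Finset.mem_image.1 this
    exact (rho_inj hn ha ha2 (hA hy) (hB hx) hxy) ▸ hy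


lemma mem_stableSets {n k : ℕ} {A : Finset ℕ} :
    A ∈ stableSets n k ↔ A ⊆ Finset.Icc 1 n ∧ A.card = k ∧ Stable n A := by
  simp only [stableSets, Finset.mem_filter, Finset.mem_powersetCard]
  tauto

lemma count_pair {n k a b : ℕ} (hk : 2 ≤ k) (hn : 2*k ≤ n) (ha : a ∈ Finset.Icc 1 n)
    (hb : b ∈ Finset.Icc 1 n) (hab : a ≠ b) :
    ((stableSets n k).filter (fun A => a ∈ A ∧ b ∈ A)).card ≤ (n-k-2).choose (k-2) := by
  have hn4 : 4 ≤ n := by omega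
  have hn2 : 2 ≤ n := by omega
  simp only [Finset.mem_Icc] at ha hb
  set b' := rho n a b with hb'def
  -- basic facts about rotated images of members
  have key : ∀ A ∈ (stableSets n k).filter (fun A => a ∈ A ∧ b ∈ A),
      (A.image (rho n a)) ⊆ Finset.Icc 1 n ∧ (A.image (rho n a)).card = k ∧
      Stable n (A.image (rho n a)) ∧ n ∈ A.image (rho n a) ∧ b' ∈ A.image (rho n a) := by
    intro A hA
    rw [Finset.mem_filter, mem_stableSets] at hA
    obtain ⟨⟨hsub, hcard, hstable⟩, haA, hbA⟩ := hA
    have hsub' : A.image (rho n a) ⊆ Finset.Icc 1 n := by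
      intro x hx; obtain ⟨y, _, rfl⟩ := Finset.mem_image.1 hx; exact rho_mem hn2 y
    refine ⟨hsub', ?_, image_stable hn2 ha.1 ha.2 hsub hstable, ?_, ?_⟩
    · rw [Finset.card_image_of_injOn, hcard]
      intro x hx y hy hxy
      exact rho_inj hn2 ha.1 ha.2 (hsub hx) (hsub hy) hxy
    · exact Finset.mem_image.2 ⟨a, haA, rho_a hn2 ha.1 ha.2⟩
    · exact Finset.mem_image.2 ⟨b, hbA, rfl⟩
  have hb'n : b' ≠ n := by
    intro h
    have heq : rho n a a = rho n a b := by rw [rho_a hn2 ha.1 ha.2, ← hb'def, h]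
    exact hab (rho_inj hn2 ha.1 ha.2 (by simp [Finset.mem_Icc]; omega)
      (by simp [Finset.mem_Icc]; omega) heq)
  have hb'Icc : 1 ≤ b' ∧ b' ≤ n := by
    have := rho_mem (a := a) hn2 b
    simpa [Finset.mem_Icc] using this
  by_cases hgood : 2 ≤ b' ∧ b' ≤ n - 2
  · -- the injection
    set Θ : Finset ℕ → Finset ℕ :=
      fun A => phi b' (((A.image (rho n a)).erase n).erase b') with hΘ
    have hGood : ∀ A ∈ (stableSets n k).filter (fun A => a ∈ A ∧ b ∈ A),
        Good n b' (((A.image (rho n a)).erase n).erase b') ∧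
        (((A.image (rho n a)).erase n).erase b').card = k - 2 := by
      intro A hA
      obtain ⟨hsub', hcard', hstable', hnA, hb'A⟩ := key A hA
      set A₁ := A.image (rho n a)
      set S := (A₁.erase n).erase b' with hSdef
      have hSsub : ∀ x ∈ S, x ∈ A₁ ∧ x ≠ n ∧ x ≠ b' := by
        intro x hx
        rw [hSdef, Finset.mem_erase, Finset.mem_erase] at hx
        exact ⟨hx.2.2, hx.2.1, hx.1⟩
      have hmemA₁ : ∀ x ∈ S, x ∈ A₁ := fun x hx => (hSsub x hx).1
      constructor
      · refine ⟨?_, ?_, ?_, ?_, ?_⟩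
        · intro x hx
          obtain ⟨hxA, hxn, hxb⟩ := hSsub x hx
          have hxIcc := hsub' hxA
          simp only [Finset.mem_Icc] at hxIcc ⊢
          have hx1 : x ≠ 1 := fun h => hstable'.2 ⟨h ▸ hxA, hnA⟩
          have hxn1 : x ≠ n - 1 := by
            intro h
            apply hstable'.1 x hxA
            rw [h, show n - 1 + 1 = n by omega]
            exact hnA
          omega
        · intro x hx hx1
          exact hstable'.1 x (hmemA₁ x hx) (hmemA₁ _ hx1)
        · intro hc
          apply hstable'.1 (b'-1) (hmemA₁ _ hc)
          rw [show b' - 1 + 1 = b' by omega]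
          exact hb'A
        · simp [hSdef]
        · intro hc
          exact hstable'.1 b' hb'A (hmemA₁ _ hc)
      · rw [hSdef, Finset.card_erase_of_mem (Finset.mem_erase.2 ⟨hb'n, hb'A⟩),
          Finset.card_erase_of_mem hnA, hcard']
        omega
    calc ((stableSets n k).filter (fun A => a ∈ A ∧ b ∈ A)).card
        ≤ ((Finset.Icc 2 (n - (k-2) - 3)).powersetCard (k-2)).card := by
          apply Finset.card_le_card_of_injOn Θ
          · intro A hA
            exact phi_mem (hGood A hA).1 hgood.1 (by omega) (hGood A hA).2
          · intro A hA B hB hAB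
            have hS := phi_injOn hgood.1 (hGood A hA).1 (hGood B hB).1
              (hGood A hA).2 (hGood B hB).2 hAB
            obtain ⟨hsubA, _, _, hnA, hb'A⟩ := key A hA
            obtain ⟨hsubB, _, _, hnB, hb'B⟩ := key B hB
            have hrec : ∀ (C : Finset ℕ), n ∈ C → b' ∈ C →
                C = insert n (insert b' ((C.erase n).erase b')) := by
              intro C hnC hb'C
              rw [Finset.insert_erase (Finset.mem_erase.2 ⟨hb'n, hb'C⟩),
                Finset.insert_erase hnC]
            have hA₁ : A.image (rho n a) = B.image (rho n a) := by
              rw [hrec _ hnA hb'A, hrec _ hnB hb'B, hS]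
            rw [Finset.mem_coe, Finset.mem_filter, mem_stableSets] at hA hB
            exact image_rho_inj hn2 ha.1 ha.2 hA.1.1 hB.1.1 hA₁
      _ ≤ (n-k-2).choose (k-2) := by
          rw [Finset.card_powersetCard, Nat.card_Icc]
          apply le_of_eq
          congr 1
          omega
  · -- degenerate: b' = 1 or b' = n-1, filter is empty
    have hempty : (stableSets n k).filter (fun A => a ∈ A ∧ b ∈ A) = ∅ := by
      rw [Finset.eq_empty_iff_forall_notMem]
      intro A hA
      obtain ⟨hsub', hcard', hstable', hnA, hb'A⟩ := key A hA
      rcases (show b' = 1 ∨ b' = n - 1 by omega) with h1 | h1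
      · exact hstable'.2 ⟨h1 ▸ hb'A, hnA⟩
      · apply hstable'.1 b' hb'A
        rw [h1, show n - 1 + 1 = n by omega]
        exact hnA
    rw [hempty]
    simp


end Stmt16

theorem stmt_16 (n k : ℕ) (hk : 2 ≤ k) (hn : 2 * k ≤ n) (F : Finset (Finset ℕ))
    (hF : F ⊆ stableSets n k) (γ : ℝ) (hγ0 : 0 < γ) (hγ1 : γ ≤ 1)
    (hpop : ∀ j ∈ Finset.Icc 1 n, ((F.filter (fun A => j ∈ A)).card : ℝ) ≤ γ * F.card)
    (F' : Finset (Finset ℕ)) (hF' : F' ⊆ F)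
    (hsize : γ * F.card + k ^ 2 * Nat.choose (n - k - 2) (k - 2) ≤ (F'.card : ℝ)) :
    ¬ (∀ A ∈ F', ∀ B ∈ F', (A ∩ B).Nonempty) := by
  intro hint
  have hCpos : 0 < (n-k-2).choose (k-2) := Nat.choose_pos (by omega)
  have hkC : (1:ℝ) ≤ (k:ℝ)^2 * ((n-k-2).choose (k-2) : ℝ) := by
    have h1 : (1:ℕ) ≤ k^2 * (n-k-2).choose (k-2) :=
      Nat.one_le_iff_ne_zero.2 (by positivity)
    exact_mod_cast h1
  have hγF : 0 ≤ γ * F.card := by positivity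
  have hne : F'.Nonempty := by
    rw [Finset.nonempty_iff_ne_empty]
    intro h
    rw [h] at hsize
    simp only [Finset.card_empty, Nat.cast_zero] at hsize
    linarith
  obtain ⟨A₀, hA₀⟩ := hne
  have hA₀mem := Stmt16.mem_stableSets.1 (hF (hF' hA₀))
  by_cases hcommon : ∃ j, ∀ B ∈ F', j ∈ B
  · obtain ⟨j, hj⟩ := hcommon
    have hjIcc : j ∈ Finset.Icc 1 n := hA₀mem.1 (hj A₀ hA₀)
    have hsub : F' ⊆ F.filter (fun A => j ∈ A) := fun B hB =>
      Finset.mem_filter.2 ⟨hF' hB, hj B hB⟩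
    have h1 : (F'.card : ℝ) ≤ γ * F.card := by
      refine le_trans ?_ (hpop j hjIcc)
      exact_mod_cast Finset.card_le_card hsub
    linarith
  · push_neg at hcommon
    choose Bf hBf1 hBf2 using hcommon
    have hcover : F' ⊆ A₀.biUnion (fun a => (Bf a).biUnion (fun b =>
        (stableSets n k).filter (fun C => a ∈ C ∧ b ∈ C))) := by
      intro C hC
      obtain ⟨a, haC⟩ := hint A₀ hA₀ C hC
      rw [Finset.mem_inter] at haC
      obtain ⟨b, hbC⟩ := hint (Bf a) (hBf1 a) C hC
      rw [Finset.mem_inter] at hbC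
      rw [Finset.mem_biUnion]
      exact ⟨a, haC.1, Finset.mem_biUnion.2 ⟨b, hbC.1,
        Finset.mem_filter.2 ⟨hF (hF' hC), haC.2, hbC.2⟩⟩⟩
    have hbound : F'.card ≤ k * (k * (n-k-2).choose (k-2)) := by
      refine le_trans (Finset.card_le_card hcover) ?_
      refine le_trans (Finset.card_biUnion_le) ?_
      have hstep : ∀ a ∈ A₀, ((Bf a).biUnion (fun b =>
          (stableSets n k).filter (fun C => a ∈ C ∧ b ∈ C))).card
          ≤ k * (n-k-2).choose (k-2) := by
        intro a ha
        refine le_trans (Finset.card_biUnion_le) ?_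
        have hBfmem := Stmt16.mem_stableSets.1 (hF (hF' (hBf1 a)))
        have hb : ∀ b ∈ Bf a, ((stableSets n k).filter
            (fun C => a ∈ C ∧ b ∈ C)).card ≤ (n-k-2).choose (k-2) := by
          intro b hb
          refine Stmt16.count_pair hk hn (hA₀mem.1 ha) (hBfmem.1 hb) ?_
          intro h
          exact hBf2 a (h ▸ hb)
        calc ∑ b ∈ Bf a, ((stableSets n k).filter
              (fun C => a ∈ C ∧ b ∈ C)).card
            ≤ ∑ _b ∈ Bf a, (n-k-2).choose (k-2) := Finset.sum_le_sum hb
          _ = (Bf a).card * (n-k-2).choose (k-2) := by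
              rw [Finset.sum_const, smul_eq_mul]
          _ = k * (n-k-2).choose (k-2) := by rw [hBfmem.2.1]
      calc ∑ a ∈ A₀, ((Bf a).biUnion (fun b =>
            (stableSets n k).filter (fun C => a ∈ C ∧ b ∈ C))).card
          ≤ ∑ _a ∈ A₀, k * (n-k-2).choose (k-2) := Finset.sum_le_sum hstep
        _ = A₀.card * (k * (n-k-2).choose (k-2)) := by
            rw [Finset.sum_const, smul_eq_mul]
        _ = k * (k * (n-k-2).choose (k-2)) := by rw [hA₀mem.2.1]
    have h2 : (F'.card : ℝ) ≤ (k:ℝ)^2 * ((n-k-2).choose (k-2) : ℝ) := by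
      have := (Nat.cast_le (α := ℝ)).2 hbound
      push_cast at this
      nlinarith [this]
    have hF1 : (1:ℝ) ≤ (F.card : ℝ) := by
      have h3 : 1 ≤ F.card := Finset.card_pos.2 ⟨A₀, hF' hA₀⟩
      exact_mod_cast h3
    nlinarith
end

section
/- For integers k ≥ 2 and n ≥ 2k and any element j ∈ {1,...,n}, and any k-subset A of {1,...,n} with j ∉ A, the number of stable k-subsets B of {1,...,n} with j ∈ B and B ∩ A ≠ ∅ is at most k·C(n-k-2, k-2). -/
open Finset

attribute [local instance] Classical.propDecidable

/-!
Union bound over `i ∈ A`: it suffices to show that at most `C(n-k-2, k-2)` stable `k`-sets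
contain two given distinct points `i` and `j`. In such a set the other `k - 2` points avoid
`i`, `j` and their four neighbours, so they lie on two arcs of the cycle. Gluing these arcs
with one free position between them gives a path on `n - 5` points, and the remaining points
form a `(k-2)`-subset of it with no two consecutive elements; there are at most
`C(n-k-2, k-2)` of these, by the recursion `f(m+2, t+1) ≤ f(m+1, t+1) + f(m, t)`.
-/

def PathStable (D : Finset ℕ) : Prop := ∀ x ∈ D, x + 1 ∉ D

theorem PathStable.mono {C D : Finset ℕ} (hD : PathStable D) (hCD : C ⊆ D) : PathStable C :=
  fun x hx hx1 => hD x (hCD hx) (hCD hx1)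

theorem card_pathStable_range_add_two_le (m t : ℕ) :
    (((range (m + 2)).powersetCard (t + 1)).filter PathStable).card ≤
      (((range (m + 1)).powersetCard (t + 1)).filter PathStable).card +
      (((range m).powersetCard t).filter PathStable).card := by
  set S := ((range (m + 2)).powersetCard (t + 1)).filter PathStable
  have h_not_mem : (S.filter (m + 1 ∉ ·)).card ≤
      (((range (m + 1)).powersetCard (t + 1)).filter PathStable).card := by
    refine card_le_card fun B hB => ?_
    simp only [S, mem_filter, mem_powersetCard] at hB ⊢
    obtain ⟨⟨⟨hBsub, hBcard⟩, hBst⟩, hmB⟩ := hB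
    refine ⟨⟨fun x hx => ?_, hBcard⟩, hBst⟩
    have : x ≠ m + 1 := fun h => hmB (h ▸ hx)
    have := mem_range.1 (hBsub hx)
    exact mem_range.2 (by omega)
  have h_mem : (S.filter (m + 1 ∈ ·)).card ≤
      (((range m).powersetCard t).filter PathStable).card := by
    refine card_le_card_of_injOn (·.erase (m + 1)) (fun B hB => ?_) fun B₁ h₁ B₂ h₂ h => ?_
    · simp only [S, mem_coe, mem_filter, mem_powersetCard] at hB ⊢
      obtain ⟨⟨⟨hBsub, hBcard⟩, hBst⟩, hmB⟩ := hB
      refine ⟨⟨fun x hx => ?_, by rw [card_erase_of_mem hmB, hBcard]; rfl⟩,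
        hBst.mono (erase_subset _ _)⟩
      have : x ≠ m := fun h => hBst m (h ▸ mem_of_mem_erase hx) hmB
      have := mem_range.1 (hBsub (mem_of_mem_erase hx))
      have := ne_of_mem_erase hx
      exact mem_range.2 (by omega)
    · simp only [S, mem_coe, mem_filter] at h₁ h₂
      rw [← insert_erase h₁.2, ← insert_erase h₂.2]
      exact congrArg _ h
  rw [← card_filter_add_card_filter_not (s := S) (p := (m + 1 ∈ ·))]
  omega

theorem card_pathStable_range_le : ∀ m t : ℕ,
    (((range m).powersetCard t).filter PathStable).card ≤ (m + 1 - t).choose t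
  | _, 0 => (card_filter_le _ _).trans (by simp)
  | 0, t + 1 => by simp
  | 1, t + 1 => by
    refine (card_filter_le _ _).trans ?_
    rcases t with _ | t
    · simp
    · simp [Nat.choose_eq_zero_of_lt]
  | m + 2, t + 1 => by
    have h_pascal : (m + 1 - t).choose (t + 1) + (m + 1 - t).choose t ≤
        (m + 2 + 1 - (t + 1)).choose (t + 1) := by
      rcases le_or_gt t (m + 1) with ht | ht
      · rw [add_comm, ← Nat.choose_succ_succ', show m + 1 - t + 1 = m + 2 + 1 - (t + 1) by omega]
      · obtain ⟨s, rfl⟩ : ∃ s, t = s + 1 := ⟨t - 1, by omega⟩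
        simp [show m + 1 - (s + 1) = 0 by omega]
    calc _ ≤ _ := card_pathStable_range_add_two_le m t
      _ ≤ (m + 1 - t).choose (t + 1) + (m + 1 - t).choose t := by
        have := card_pathStable_range_le (m + 1) (t + 1)
        rw [show m + 1 + 1 - (t + 1) = m + 1 - t by omega] at this
        exact add_le_add this (card_pathStable_range_le m t)
      _ ≤ _ := h_pascal

theorem Stable.not_adj {n : ℕ} {B : Finset ℕ} (hB : Stable n B) {a b : ℕ} (ha : a ∈ B)
    (hb : b ∈ B) : ¬(b = a + 1 ∨ a = n ∧ b = 1) := by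
  rintro (rfl | ⟨rfl, rfl⟩)
  · exact hB.1 a ha hb
  · exact hB.2 ⟨hb, ha⟩

theorem mem_stableSets {n k : ℕ} {B : Finset ℕ} :
    B ∈ stableSets n k ↔ (B ⊆ Icc 1 n ∧ B.card = k) ∧ Stable n B := by
  rw [stableSets, mem_filter, mem_powersetCard]

/-- The distance from `i` to `x` walking forward along the cycle `1 → 2 → ⋯ → n → 1`. -/
def cycOffset (n i x : ℕ) : ℕ := if i ≤ x then x - i else x + n - i

/-- `x` lies on one of the two arcs left after deleting `i`, `j` and their neighbours from the
cycle (when `j` is not a neighbour of `i`). -/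
def FarFrom (n i j x : ℕ) : Prop :=
  x ∈ Icc 1 n ∧ 2 ≤ cycOffset n i x ∧ cycOffset n i x + 2 ≤ n ∧
    (cycOffset n i x + 2 ≤ cycOffset n i j ∨ cycOffset n i j + 2 ≤ cycOffset n i x)

/-- Glues the two arcs of `FarFrom n i j` into the path `0, …, n - 6`, leaving the position
between them free so that no adjacency is created. -/
def pairCode (n i j x : ℕ) : ℕ :=
  if cycOffset n i x < cycOffset n i j then cycOffset n i x - 2 else cycOffset n i x - 4

section pairCode

variable {n i j : ℕ}

theorem cycOffset_bounds_of_stable {B : Finset ℕ} (hB : Stable n B) (hBsub : B ⊆ Icc 1 n)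
    (hi : i ∈ B) (hj : j ∈ B) (hij : i ≠ j) :
    2 ≤ cycOffset n i j ∧ cycOffset n i j + 2 ≤ n := by
  have := hB.not_adj hi hj; have := hB.not_adj hj hi
  have := mem_Icc.1 (hBsub hi); have := mem_Icc.1 (hBsub hj)
  unfold cycOffset
  split_ifs <;> omega

theorem farFrom_of_stable {B : Finset ℕ} (hB : Stable n B) (hBsub : B ⊆ Icc 1 n) (hi : i ∈ B)
    (hj : j ∈ B) {x : ℕ} (hx : x ∈ B \ {i, j}) : FarFrom n i j x := by
  simp only [mem_sdiff, mem_insert, mem_singleton, not_or] at hx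
  obtain ⟨hx, hxi, hxj⟩ := hx
  have := hB.not_adj hi hx; have := hB.not_adj hx hi
  have := hB.not_adj hj hx; have := hB.not_adj hx hj
  have := mem_Icc.1 (hBsub hi); have := mem_Icc.1 (hBsub hj); have hxn := mem_Icc.1 (hBsub hx)
  refine ⟨mem_Icc.2 hxn, ?_⟩
  unfold cycOffset
  split_ifs <;> omega

theorem pairCode_lt (hj₁ : 2 ≤ cycOffset n i j) (hj₂ : cycOffset n i j + 2 ≤ n) {x : ℕ}
    (hx : FarFrom n i j x) : pairCode n i j x < n - 5 := by
  obtain ⟨-, hx⟩ := hx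
  unfold pairCode
  split_ifs <;> omega

theorem pairCode_injOn (hj : 2 ≤ cycOffset n i j) :
    Set.InjOn (pairCode n i j) {x | FarFrom n i j x} := by
  rintro x ⟨hxn, hx⟩ y ⟨hyn, hy⟩ hxy
  rw [mem_Icc] at hxn hyn
  unfold pairCode cycOffset at *
  split_ifs at * <;> omega

theorem pairCode_eq_succ (hj : 2 ≤ cycOffset n i j) {x y : ℕ}
    (hx : FarFrom n i j x) (hy : FarFrom n i j y)
    (hxy : pairCode n i j y = pairCode n i j x + 1) : y = x + 1 ∨ x = n ∧ y = 1 := by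
  obtain ⟨hxn, hx⟩ := hx
  obtain ⟨hyn, hy⟩ := hy
  rw [mem_Icc] at hxn hyn
  unfold pairCode cycOffset at *
  split_ifs at * <;> omega

end pairCode

section pairCount

variable {n k i j : ℕ}

theorem image_pairCode_mem {B : Finset ℕ} (hB : B ∈ stableSets n k) (hi : i ∈ B) (hj : j ∈ B)
    (hij : i ≠ j) :
    (B \ {i, j}).image (pairCode n i j) ∈
      ((range (n - 5)).powersetCard (k - 2)).filter PathStable := by
  obtain ⟨⟨hBsub, hBcard⟩, hBst⟩ := mem_stableSets.1 hB
  obtain ⟨hj₁, hj₂⟩ := cycOffset_bounds_of_stable hBst hBsub hi hj hij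
  have hfar : ∀ x ∈ B \ {i, j}, FarFrom n i j x := fun x => farFrom_of_stable hBst hBsub hi hj
  refine mem_filter.2 ⟨mem_powersetCard.2 ⟨?_, ?_⟩, ?_⟩
  · exact image_subset_iff.2 fun x hx => mem_range.2 (pairCode_lt hj₁ hj₂ (hfar x hx))
  · rw [card_image_of_injOn ((pairCode_injOn hj₁).mono hfar),
      card_sdiff_of_subset (insert_subset hi (singleton_subset_iff.2 hj)), card_pair hij, hBcard]
  · simp only [PathStable, mem_image]
    rintro _ ⟨x, hx, rfl⟩ ⟨y, hy, hxy⟩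
    exact hBst.not_adj (mem_sdiff.1 hx).1 (mem_sdiff.1 hy).1
      (pairCode_eq_succ hj₁ (hfar x hx) (hfar y hy) hxy)

theorem eq_of_image_pairCode_eq {B₁ B₂ : Finset ℕ} (hB₁ : B₁ ∈ stableSets n k) (hi₁ : i ∈ B₁)
    (hj₁ : j ∈ B₁) (hB₂ : B₂ ∈ stableSets n k) (hi₂ : i ∈ B₂) (hj₂ : j ∈ B₂) (hij : i ≠ j)
    (h : (B₁ \ {i, j}).image (pairCode n i j) = (B₂ \ {i, j}).image (pairCode n i j)) :
    B₁ = B₂ := by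
  obtain ⟨⟨hsub₁, -⟩, hst₁⟩ := mem_stableSets.1 hB₁
  obtain ⟨⟨hsub₂, -⟩, hst₂⟩ := mem_stableSets.1 hB₂
  have hinj := pairCode_injOn (cycOffset_bounds_of_stable hst₁ hsub₁ hi₁ hj₁ hij).1
  have hsdiff : B₁ \ {i, j} = B₂ \ {i, j} := by
    exact_mod_cast (hinj.image_eq_image_iff (fun x => farFrom_of_stable hst₁ hsub₁ hi₁ hj₁)
      (fun x => farFrom_of_stable hst₂ hsub₂ hi₂ hj₂)).1 (by exact_mod_cast h)
  rw [← sdiff_union_of_subset (insert_subset hi₁ (singleton_subset_iff.2 hj₁)),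
    ← sdiff_union_of_subset (insert_subset hi₂ (singleton_subset_iff.2 hj₂)), hsdiff]

theorem card_stableSets_mem_pair_le (hij : i ≠ j) :
    ((stableSets n k).filter (fun B => i ∈ B ∧ j ∈ B)).card ≤ (n - k - 2).choose (k - 2) := by
  calc _ ≤ (((range (n - 5)).powersetCard (k - 2)).filter PathStable).card := by
        refine card_le_card_of_injOn (fun B => (B \ {i, j}).image (pairCode n i j))
          (fun B hB => ?_) fun B₁ hB₁ B₂ hB₂ h => ?_
        · obtain ⟨hB, hi, hj⟩ := mem_filter.1 hB
          exact image_pairCode_mem hB hi hj hij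
        · obtain ⟨hB₁, hi₁, hj₁⟩ := mem_filter.1 (mem_coe.1 hB₁)
          obtain ⟨hB₂, hi₂, hj₂⟩ := mem_filter.1 (mem_coe.1 hB₂)
          exact eq_of_image_pairCode_eq hB₁ hi₁ hj₁ hB₂ hi₂ hj₂ hij h
    _ ≤ (n - 5 + 1 - (k - 2)).choose (k - 2) := card_pathStable_range_le _ _
    _ ≤ (n - k - 2).choose (k - 2) := by
        rcases le_or_gt k 2 with hk | hk
        · simp [Nat.sub_eq_zero_of_le hk]
        · exact Nat.choose_le_choose _ (by omega)

end pairCount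

theorem stmt_18_general (n k : ℕ) (j : ℕ) (A : Finset ℕ)
    (hAcard : A.card = k) (hjA : j ∉ A) :
    ((stableSets n k).filter (fun B => j ∈ B ∧ (B ∩ A).Nonempty)).card
      ≤ k * Nat.choose (n - k - 2) (k - 2) := by
  have h_cover : (stableSets n k).filter (fun B => j ∈ B ∧ (B ∩ A).Nonempty) ⊆
      A.biUnion fun i => (stableSets n k).filter fun B => i ∈ B ∧ j ∈ B := by
    intro B hB
    obtain ⟨hB, hjB, i, hiBA⟩ := mem_filter.1 hB
    obtain ⟨hiB, hiA⟩ := mem_inter.1 hiBA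
    exact mem_biUnion.2 ⟨i, hiA, mem_filter.2 ⟨hB, hiB, hjB⟩⟩
  calc _ ≤ _ := card_le_card h_cover
    _ ≤ A.card * (n - k - 2).choose (k - 2) := card_biUnion_le_card_mul _ _ _ fun i hi =>
        card_stableSets_mem_pair_le fun hij => hjA (hij ▸ hi)
    _ = k * (n - k - 2).choose (k - 2) := by rw [hAcard]

theorem stmt_18 (n k : ℕ) (hk : 2 ≤ k) (hn : 2 * k ≤ n) (j : ℕ)
    (hj : j ∈ Finset.Icc 1 n) (A : Finset ℕ) (hA : A ⊆ Finset.Icc 1 n)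
    (hAcard : A.card = k) (hjA : j ∉ A) :
    ((stableSets n k).filter (fun B => j ∈ B ∧ (B ∩ A).Nonempty)).card
      ≤ k * Nat.choose (n - k - 2) (k - 2) :=
  stmt_18_general n k j A hAcard hjA
end
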